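/- arXiv:1912.11360 — 2 statements merged into one kernel-verified Lean document; each statement's English description precedes it below -/
import Mathlib

section
/- Let Ω have finite measure and q : Ω → ℝ be measurable with 1 < q⁻ ≤ q(x) ≤ q⁺ < ∞, and let q'(x) = q(x)/(q(x)−1). The Nemytskii operator φ(u)(x) := |u(x)|^{q(x)−2} u(x) maps L^{q(x)}(Ω) into L^{q'(x)}(Ω) and is bounded: ‖φ(u)‖_{q'(x)} ≤ ‖u‖_{q(x)}^{q⁻} + ‖u‖_{q(x)}^{q⁺} + 1 for all u ∈ L^{q(x)}(Ω). -/
open MeasureTheory Real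

/-- The modular `ρ(u) = ∫_Ω |u(x)|^{p(x)} dx`. -/
noncomputable def modular {N : ℕ} (Ω : Set (EuclideanSpace ℝ (Fin N)))
    (p : EuclideanSpace ℝ (Fin N) → ℝ) (u : EuclideanSpace ℝ (Fin N) → ℝ) : ℝ :=
  ∫ x in Ω, |u x| ^ p x

/-- The Luxemburg norm `‖u‖ = inf {λ > 0 : ρ(u/λ) ≤ 1}`. -/
noncomputable def luxNorm {N : ℕ} (Ω : Set (EuclideanSpace ℝ (Fin N)))
    (p : EuclideanSpace ℝ (Fin N) → ℝ) (u : EuclideanSpace ℝ (Fin N) → ℝ) : ℝ :=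
  sInf {l : ℝ | 0 < l ∧ modular Ω p (fun x => u x / l) ≤ 1}

/-- The Nemytskii operator `φ(u)(x) = |u(x)|^{q(x)-2} u(x) = |u(x)|^{q(x)-1} sign(u(x))`. -/
noncomputable def nemytskii {N : ℕ} (q : EuclideanSpace ℝ (Fin N) → ℝ)
    (u : EuclideanSpace ℝ (Fin N) → ℝ) (x : EuclideanSpace ℝ (Fin N)) : ℝ :=
  |u x| ^ (q x - 1) * Real.sign (u x)

section Aux

variable {N : ℕ}

lemma meas_rpow {α : Type*} [MeasurableSpace α] {f g : α → ℝ} (hf : Measurable f)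
    (hg : Measurable g) : Measurable fun x => f x ^ g x := by measurability

lemma measurable_realSign : Measurable Real.sign := by
  have h : Real.sign = fun r : ℝ => if r < 0 then (-1 : ℝ) else if 0 < r then 1 else 0 := rfl
  rw [h]
  exact Measurable.ite (measurableSet_lt measurable_id measurable_const) measurable_const
    (Measurable.ite (measurableSet_lt measurable_const measurable_id) measurable_const
      measurable_const)

lemma modular_nonneg (Ω : Set (EuclideanSpace ℝ (Fin N))) (p u : EuclideanSpace ℝ (Fin N) → ℝ) :
    0 ≤ modular Ω p u :=
  integral_nonneg fun x => Real.rpow_nonneg (abs_nonneg _) _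

lemma int_div {Ω : Set (EuclideanSpace ℝ (Fin N))} (hΩ : MeasurableSet Ω)
    {p v : EuclideanSpace ℝ (Fin N) → ℝ} (hv : Measurable v) (hp : Measurable p)
    {qm qp : ℝ} (hbounds : ∀ x ∈ Ω, qm ≤ p x ∧ p x ≤ qp)
    (hI : Integrable (fun x => |v x| ^ p x) (volume.restrict Ω))
    {c : ℝ} (hc : 0 < c) :
    Integrable (fun x => |v x / c| ^ p x) (volume.restrict Ω) := by
  set C := min (c ^ qm) (c ^ qp) with hCdef
  have hC0 : 0 < C := lt_min (rpow_pos_of_pos hc _) (rpow_pos_of_pos hc _)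
  have hCle : ∀ x ∈ Ω, C ≤ c ^ p x := by
    intro x hx
    rcases le_or_gt 1 c with h1 | h1
    · exact le_trans (min_le_left _ _) (rpow_le_rpow_of_exponent_le h1 (hbounds x hx).1)
    · exact le_trans (min_le_right _ _) (rpow_le_rpow_of_exponent_ge hc h1.le (hbounds x hx).2)
  have hbound : ∀ x ∈ Ω, |v x / c| ^ p x ≤ |v x| ^ p x / C := by
    intro x hx
    rw [abs_div, abs_of_pos hc, div_rpow (abs_nonneg _) hc.le]
    exact div_le_div_of_nonneg_left (rpow_nonneg (abs_nonneg _) _) hC0 (hCle x hx)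
  refine Integrable.mono' (hI.div_const C)
    ((meas_rpow (hv.div_const c).abs hp).aestronglyMeasurable) ?_
  filter_upwards [ae_restrict_mem hΩ] with x hx
  rw [Real.norm_of_nonneg (rpow_nonneg (abs_nonneg _) _)]
  exact hbound x hx

lemma mem_lux_set {Ω : Set (EuclideanSpace ℝ (Fin N))} (hΩ : MeasurableSet Ω)
    {p v : EuclideanSpace ℝ (Fin N) → ℝ} (hv : Measurable v) (hp : Measurable p)
    (hp1 : ∀ x ∈ Ω, 1 ≤ p x)
    (hI : Integrable (fun x => |v x| ^ p x) (volume.restrict Ω)) :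
    (modular Ω p v + 1) ∈ {l : ℝ | 0 < l ∧ modular Ω p (fun x => v x / l) ≤ 1} := by
  have hρ : 0 ≤ modular Ω p v := modular_nonneg Ω p v
  set M := modular Ω p v + 1 with hMdef
  have hM1 : 1 ≤ M := by simp only [hMdef]; linarith
  have hM0 : 0 < M := by linarith
  refine ⟨hM0, ?_⟩
  have hbound : ∀ x ∈ Ω, |v x / M| ^ p x ≤ |v x| ^ p x / M := by
    intro x hx
    rw [abs_div, abs_of_pos hM0, div_rpow (abs_nonneg _) hM0.le]
    refine div_le_div_of_nonneg_left (rpow_nonneg (abs_nonneg _) _) hM0 ?_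
    calc M = M ^ (1 : ℝ) := (rpow_one M).symm
      _ ≤ M ^ p x := rpow_le_rpow_of_exponent_le hM1 (hp1 x hx)
  have hIl : Integrable (fun x => |v x / M| ^ p x) (volume.restrict Ω) := by
    refine Integrable.mono' (hI.div_const M)
      ((meas_rpow (hv.div_const M).abs hp).aestronglyMeasurable) ?_
    filter_upwards [ae_restrict_mem hΩ] with x hx
    rw [Real.norm_of_nonneg (rpow_nonneg (abs_nonneg _) _)]
    exact hbound x hx
  have h2 : modular Ω p (fun x => v x / M) ≤ modular Ω p v / M := by
    simp only [modular, ← integral_div]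
    exact setIntegral_mono_on hIl (hI.div_const M) hΩ hbound
  refine h2.trans ?_
  rw [div_le_one hM0]
  linarith

lemma lux_le_modular_add_one {Ω : Set (EuclideanSpace ℝ (Fin N))} (hΩ : MeasurableSet Ω)
    {p v : EuclideanSpace ℝ (Fin N) → ℝ} (hv : Measurable v) (hp : Measurable p)
    (hp1 : ∀ x ∈ Ω, 1 ≤ p x)
    (hI : Integrable (fun x => |v x| ^ p x) (volume.restrict Ω)) :
    luxNorm Ω p v ≤ modular Ω p v + 1 :=
  csInf_le ⟨0, fun _ hl => hl.1.le⟩ (mem_lux_set hΩ hv hp hp1 hI)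

lemma modular_le_lux {Ω : Set (EuclideanSpace ℝ (Fin N))} (hΩ : MeasurableSet Ω)
    {p v : EuclideanSpace ℝ (Fin N) → ℝ} (hv : Measurable v) (hp : Measurable p)
    {qm qp : ℝ} (hqm : 0 < qm) (hqp : qm ≤ qp)
    (hp1 : ∀ x ∈ Ω, 1 ≤ p x) (hbounds : ∀ x ∈ Ω, qm ≤ p x ∧ p x ≤ qp)
    (hI : Integrable (fun x => |v x| ^ p x) (volume.restrict Ω)) :
    modular Ω p v ≤ luxNorm Ω p v ^ qm + luxNorm Ω p v ^ qp := by
  set S := {l : ℝ | 0 < l ∧ modular Ω p (fun x => v x / l) ≤ 1} with hSdef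
  have hne : S.Nonempty := ⟨_, mem_lux_set hΩ hv hp hp1 hI⟩
  have hlux : luxNorm Ω p v = sInf S := rfl
  have key : ∀ l ∈ Set.Ioi (luxNorm Ω p v), modular Ω p v ≤ l ^ qm + l ^ qp := by
    intro l hl
    obtain ⟨s, hsS, hsl⟩ := exists_lt_of_csInf_lt hne (hlux ▸ hl)
    have hs0 : 0 < s := hsS.1
    have hl0 : 0 < l := hs0.trans hsl
    have hml : modular Ω p (fun x => v x / l) ≤ 1 := by
      refine le_trans ?_ hsS.2
      simp only [modular]
      refine setIntegral_mono_on (int_div hΩ hv hp hbounds hI hl0)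
        (int_div hΩ hv hp hbounds hI hs0) hΩ ?_
      intro x hx
      have h1 : |v x / l| ≤ |v x / s| := by
        rw [abs_div, abs_div, abs_of_pos hl0, abs_of_pos hs0]
        exact div_le_div_of_nonneg_left (abs_nonneg _) hs0 hsl.le
      exact rpow_le_rpow (abs_nonneg _) h1 (le_trans zero_le_one (hp1 x hx))
    have hcl : 0 ≤ l ^ qm + l ^ qp :=
      add_nonneg (rpow_nonneg hl0.le _) (rpow_nonneg hl0.le _)
    have hpt : ∀ x ∈ Ω, |v x| ^ p x ≤ (l ^ qm + l ^ qp) * |v x / l| ^ p x := by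
      intro x hx
      have heq : l ^ p x * |v x / l| ^ p x = |v x| ^ p x := by
        rw [abs_div, abs_of_pos hl0, div_rpow (abs_nonneg _) hl0.le, mul_comm,
          div_mul_cancel₀ _ (ne_of_gt (rpow_pos_of_pos hl0 _))]
      rw [← heq]
      refine mul_le_mul_of_nonneg_right ?_ (rpow_nonneg (abs_nonneg _) _)
      rcases le_or_gt 1 l with h1 | h1
      · have h3 := rpow_le_rpow_of_exponent_le h1 (hbounds x hx).2
        have h2 : (0 : ℝ) ≤ l ^ qm := (rpow_pos_of_pos hl0 _).le
        linarith
      · have h3 := rpow_le_rpow_of_exponent_ge hl0 h1.le (hbounds x hx).1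
        have h2 : (0 : ℝ) ≤ l ^ qp := (rpow_pos_of_pos hl0 _).le
        linarith
    calc modular Ω p v ≤ (l ^ qm + l ^ qp) * modular Ω p (fun x => v x / l) := by
          simp only [modular, ← integral_const_mul]
          exact setIntegral_mono_on hI ((int_div hΩ hv hp hbounds hI hl0).const_mul _) hΩ hpt
      _ ≤ (l ^ qm + l ^ qp) * 1 := mul_le_mul_of_nonneg_left hml hcl
      _ = l ^ qm + l ^ qp := mul_one _
  have hcont : ContinuousWithinAt (fun x : ℝ => x ^ qm + x ^ qp)
      (Set.Ioi (luxNorm Ω p v)) (luxNorm Ω p v) :=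
    ContinuousAt.continuousWithinAt
      ((Real.continuousAt_rpow_const _ _ (Or.inr hqm.le)).add
        (Real.continuousAt_rpow_const _ _ (Or.inr (hqm.trans_le hqp).le)))
  exact ge_of_tendsto hcont.tendsto (eventually_mem_nhdsWithin.mono key)

end Aux

theorem stmt8 {N : ℕ} (Ω : Set (EuclideanSpace ℝ (Fin N))) (hΩ : MeasurableSet Ω)
    (hfin : volume Ω < ⊤)
    (q : EuclideanSpace ℝ (Fin N) → ℝ) (hq : Measurable q)
    (qm qp : ℝ) (hqm : 1 < qm) (hqp : qm ≤ qp)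
    (hbounds : ∀ x ∈ Ω, qm ≤ q x ∧ q x ≤ qp)
    (u : EuclideanSpace ℝ (Fin N) → ℝ) (hu : Measurable u)
    (huI : Integrable (fun x => |u x| ^ q x) (volume.restrict Ω)) :
    Integrable (fun x => |nemytskii q u x| ^ (q x / (q x - 1))) (volume.restrict Ω) ∧
    luxNorm Ω (fun x => q x / (q x - 1)) (nemytskii q u) ≤
      luxNorm Ω q u ^ qm + luxNorm Ω q u ^ qp + 1 := by
  have hq'm : Measurable fun x => q x / (q x - 1) := hq.div (hq.sub measurable_const)
  have hφm : Measurable (nemytskii q u) := by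
    unfold nemytskii
    exact (meas_rpow hu.abs (hq.sub measurable_const)).mul (measurable_realSign.comp hu)
  have peq : ∀ x ∈ Ω, |nemytskii q u x| ^ (q x / (q x - 1)) = |u x| ^ q x := by
    intro x hx
    have h1 : 1 < q x := lt_of_lt_of_le hqm (hbounds x hx).1
    have h2 : q x - 1 ≠ 0 := sub_ne_zero_of_ne (by linarith)
    have h3 : q x / (q x - 1) ≠ 0 := ne_of_gt (div_pos (by linarith) (by linarith))
    have h4 : q x ≠ 0 := by intro h; linarith [h ▸ h1]
    rcases eq_or_ne (u x) 0 with h0 | h0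
    · simp only [nemytskii, h0, Real.sign_zero, mul_zero, abs_zero]
      rw [Real.zero_rpow h3, Real.zero_rpow h4]
    · have hsign : |Real.sign (u x)| = 1 := by
        rcases h0.lt_or_gt with h | h
        · rw [Real.sign_of_neg h]; norm_num
        · rw [Real.sign_of_pos h]; norm_num
      rw [nemytskii, abs_mul, hsign, mul_one,
        abs_of_nonneg (rpow_nonneg (abs_nonneg _) _), ← Real.rpow_mul (abs_nonneg _)]
      congr 1
      rw [mul_comm, div_mul_cancel₀ _ h2]
  have hIφ : Integrable (fun x => |nemytskii q u x| ^ (q x / (q x - 1)))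
      (volume.restrict Ω) := by
    refine huI.congr ?_
    filter_upwards [ae_restrict_mem hΩ] with x hx
    exact (peq x hx).symm
  refine ⟨hIφ, ?_⟩
  have hmeq : modular Ω (fun x => q x / (q x - 1)) (nemytskii q u) = modular Ω q u := by
    simp only [modular]
    exact setIntegral_congr_fun hΩ fun x hx => peq x hx
  have hp1' : ∀ x ∈ Ω, 1 ≤ q x / (q x - 1) := by
    intro x hx
    have h1 : 1 < q x := lt_of_lt_of_le hqm (hbounds x hx).1
    rw [le_div_iff₀ (by linarith)]
    linarith
  have hA := lux_le_modular_add_one hΩ hφm hq'm hp1' hIφ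
  have hp1 : ∀ x ∈ Ω, 1 ≤ q x := fun x hx => hqm.le.trans (hbounds x hx).1
  have hB := modular_le_lux hΩ hu hq (by linarith : (0:ℝ) < qm) hqp hp1 hbounds huI
  rw [hmeq] at hA
  linarith
end

section
/- Let X be a real reflexive Banach space and L : X → X* a bounded, demicontinuous, strictly monotone operator of type (S₊) which is coercive (⟨Lu,u⟩/‖u‖ → ∞ as ‖u‖ → ∞). Then L is a bijection from X onto X*, and its inverse T = L⁻¹ : X* → X is bounded and satisfies condition (S₊) in the sense that for vₙ ⇀ v in X* with limsup ⟨vₙ − v, Tvₙ − Tv⟩ ≤ 0, one has Tvₙ → Tv. -/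
open Filter Topology Bornology

variable {X : Type*} [NormedAddCommGroup X] [NormedSpace ℝ X]

/-- Weak convergence of a sequence in `X`. -/
def WeakConvSeq (u : ℕ → X) (x : X) : Prop :=
  ∀ f : StrongDual ℝ X, Tendsto (fun n => f (u n)) atTop (𝓝 (f x))

/-!
Injectivity is strict monotonicity, and coercivity bounds `‖u‖` as soon as `L u u ≤ C * ‖u‖`,
which makes `L⁻¹` bounded.

Surjectivity is proved by Galerkin approximation. On a finite-dimensional subspace `V`, transported
to a Euclidean space, the regularized problem `A + ε • id` is strongly monotone, hence solvable by
induction on the dimension: the component along a unit vector `e` is fixed by the intermediate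
value theorem and depends continuously on the rest, which reduces the problem to `eᗮ`. Letting
`ε → 0` solves `L u = f` on `V`. These solutions are bounded, so in the reflexive space `X` they
have a weak cluster point `u`, and Minty's trick (monotonicity plus demicontinuity) gives `L u = f`.

For `(S₊)` of the inverse, let `vₙ ⇀* w`. Then `uₙ = L⁻¹ vₙ` is bounded by Banach–Steinhaus, the
pairings `(vₙ - w) (uₙ - u)` are nonnegative with `limsup ≤ 0`, hence tend to `0`, and Minty's
trick shows that every weak cluster point of `(uₙ)` is `u = L⁻¹ w`. Hence `uₙ ⇀ u`,
`L uₙ (uₙ - u) → 0`, and `(S₊)` of `L` gives `uₙ → u`.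
-/

open NormedSpace

section WeakTopology

theorem continuous_apply_toWeakSpace_symm (g : StrongDual ℝ X) :
    Continuous fun y : WeakSpace ℝ X => g ((toWeakSpace ℝ X).symm y) :=
  WeakBilin.eval_continuous _ g

theorem surjective_inclusionInDoubleDualWeak
    (hrefl : Function.Surjective (inclusionInDoubleDual ℝ X)) :
    Function.Surjective (inclusionInDoubleDualWeak ℝ X) := by
  intro ψ
  obtain ⟨u, hu⟩ := hrefl (WeakDual.toStrongDual ψ)
  exact ⟨toWeakSpace ℝ X u, DFunLike.ext _ _ (DFunLike.congr_fun hu)⟩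

theorem isCompact_closure_image_toWeakSpace
    (hrefl : Function.Surjective (inclusionInDoubleDual ℝ X)) {s : Set X} (hs : IsBounded s) :
    IsCompact (closure (toWeakSpace ℝ X '' s)) := by
  refine isCompact_closure_of_isBounded ℝ X _ ?_ ?_
  · rwa [Set.preimage_image_eq _ (toWeakSpace ℝ X).injective]
  · rw [(surjective_inclusionInDoubleDualWeak hrefl).range_eq]
    exact Set.subset_univ _

variable {ι : Type*} {l : Filter ι} {x : ι → X}

theorem exists_mapClusterPt_toWeakSpace
    (hrefl : Function.Surjective (inclusionInDoubleDual ℝ X)) [l.NeBot]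
    (hx : IsBounded (Set.range x)) :
    ∃ u, MapClusterPt (toWeakSpace ℝ X u) l (toWeakSpace ℝ X ∘ x) := by
  obtain ⟨ψ, -, hψ⟩ := (isCompact_closure_image_toWeakSpace hrefl hx).exists_mapClusterPt
    (f := l) (u := toWeakSpace ℝ X ∘ x) (by
      rw [le_principal_iff, mem_map]
      exact Eventually.of_forall fun i => subset_closure ⟨x i, Set.mem_range_self i, rfl⟩)
  exact ⟨(toWeakSpace ℝ X).symm ψ, by simpa using hψ⟩

theorem tendsto_toWeakSpace_of_unique_mapClusterPt
    (hrefl : Function.Surjective (inclusionInDoubleDual ℝ X))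
    (hx : IsBounded (Set.range x)) {u : X}
    (h : ∀ u', MapClusterPt (toWeakSpace ℝ X u') l (toWeakSpace ℝ X ∘ x) → u' = u) :
    Tendsto (toWeakSpace ℝ X ∘ x) l (𝓝 (toWeakSpace ℝ X u)) := by
  refine (isCompact_closure_image_toWeakSpace hrefl hx).tendsto_nhds_of_unique_mapClusterPt
    (Eventually.of_forall fun i => subset_closure ⟨x i, Set.mem_range_self i, rfl⟩) ?_
  intro ψ _ hψ
  rw [← h ((toWeakSpace ℝ X).symm ψ) (by simpa using hψ)]
  simp

theorem apply_le_of_mapClusterPt_toWeakSpace {u : X}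
    (hu : MapClusterPt (toWeakSpace ℝ X u) l (toWeakSpace ℝ X ∘ x)) (g : StrongDual ℝ X)
    {b : ι → ℝ} {c : ℝ} (hb : Tendsto b l (𝓝 c)) (hle : ∀ᶠ i in l, g (x i) ≤ b i) :
    g u ≤ c := by
  have hgu := hu.continuousAt_comp (continuous_apply_toWeakSpace_symm g).continuousAt
  simp only [LinearEquiv.symm_apply_apply] at hgu
  refine le_of_forall_pos_le_add fun ε hε => ?_
  have hev : ∀ᶠ i in l, g (x i) ∈ Set.Iic (c + ε) := by
    filter_upwards [hle, hb.eventually (eventually_le_nhds (lt_add_of_pos_right c hε))]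
      with i h1 h2 using h1.trans h2
  exact isClosed_Iic.mem_of_mapClusterPt hgu hev

theorem weakConvSeq_of_tendsto_toWeakSpace {u : ℕ → X} {x : X}
    (h : Tendsto (toWeakSpace ℝ X ∘ u) atTop (𝓝 (toWeakSpace ℝ X x))) : WeakConvSeq u x :=
  fun g => ((continuous_apply_toWeakSpace_symm g).tendsto _).comp h

end WeakTopology

section MonotoneOperator

def Demicontinuous (L : X → StrongDual ℝ X) : Prop :=
  ∀ (u : ℕ → X) (x : X), Tendsto u atTop (𝓝 x) →
    ∀ w : X, Tendsto (fun n => L (u n) w) atTop (𝓝 (L x w))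

def IsMonotoneOperator (L : X → StrongDual ℝ X) : Prop :=
  ∀ u v : X, 0 ≤ (L u - L v) (u - v)

def IsStrictMonotoneOperator (L : X → StrongDual ℝ X) : Prop :=
  ∀ u v : X, u ≠ v → 0 < (L u - L v) (u - v)

variable {L : X → StrongDual ℝ X}

theorem Demicontinuous.continuous_apply {E : Type*} [TopologicalSpace E]
    [FirstCountableTopology E] (hL : Demicontinuous L) {Φ : E → X} (hΦ : Continuous Φ)
    (w : X) : Continuous fun a => L (Φ a) w :=
  continuous_iff_seqContinuous.2 fun _ a ha => hL _ _ ((hΦ.tendsto a).comp ha) w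

-- Minty's trick: test the inequality at `z = u + t • y` and let `t → 0`.
theorem Demicontinuous.eq_of_forall_nonneg (hL : Demicontinuous L) {u : X}
    {f : StrongDual ℝ X} (h : ∀ z, 0 ≤ (L z - f) (z - u)) : L u = f := by
  have key : ∀ y, f y ≤ L u y := by
    intro y
    set t : ℕ → ℝ := fun n => 1 / ((n : ℝ) + 1)
    have ht : Tendsto t atTop (𝓝 0) := tendsto_one_div_add_atTop_nhds_zero_nat
    have hz : Tendsto (fun n => u + t n • y) atTop (𝓝 u) := by
      simpa using tendsto_const_nhds.add (ht.smul_const y)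
    refine ge_of_tendsto (hL _ u hz y) (Eventually.of_forall fun n => ?_)
    have hpos : 0 < t n := by positivity
    have h0 := h (u + t n • y)
    rw [add_sub_cancel_left, map_smul, smul_eq_mul] at h0
    simpa using nonneg_of_mul_nonneg_right h0 hpos
  ext y
  linarith [key y, key (-y), map_neg (L u) y, map_neg f y]

theorem IsStrictMonotoneOperator.isMonotoneOperator (hmono : IsStrictMonotoneOperator L) :
    IsMonotoneOperator L := by
  intro u v
  rcases eq_or_ne u v with rfl | h
  · simp
  · exact (hmono u v h).le

theorem IsStrictMonotoneOperator.injective (hmono : IsStrictMonotoneOperator L) :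
    Function.Injective L := by
  intro u v h
  by_contra hne
  simpa [h] using hmono u v hne

theorem exists_norm_le_of_apply_self_le
    (hcoer : ∀ M : ℝ, ∃ R : ℝ, ∀ u : X, R ≤ ‖u‖ → M * ‖u‖ ≤ L u u) (C : ℝ) :
    ∃ R, ∀ u, L u u ≤ C * ‖u‖ → ‖u‖ ≤ R := by
  obtain ⟨R, hR⟩ := hcoer (C + 1)
  refine ⟨max R 0, fun u hu => ?_⟩
  by_contra! hlt
  have := hR u ((le_max_left R 0).trans hlt.le)
  nlinarith [le_max_right R 0]

end MonotoneOperator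

section StronglyMonotone

open Module Submodule
open scoped RealInnerProductSpace

theorem mul_abs_sub_le_abs_sub {c t s a b : ℝ}
    (h : c * (t - s) ^ 2 ≤ (a - b) * (t - s)) : c * |t - s| ≤ |a - b| := by
  rcases eq_or_ne t s with rfl | hts
  · simp
  refine le_of_mul_le_mul_right ?_ (abs_pos.2 (sub_ne_zero.2 hts))
  calc c * |t - s| * |t - s| = c * (t - s) ^ 2 := by rw [mul_assoc, ← sq, sq_abs]
    _ ≤ (a - b) * (t - s) := h
    _ ≤ |a - b| * |t - s| := by rw [← abs_mul]; exact le_abs_self _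

theorem surjective_of_strongMono_real {φ : ℝ → ℝ} {c : ℝ} (hc : 0 < c) (hφ : Continuous φ)
    (h : ∀ t s, c * (t - s) ^ 2 ≤ (φ t - φ s) * (t - s)) : Function.Surjective φ := by
  have hlin : ∀ t s, s ≤ t → φ s + c * (t - s) ≤ φ t := by
    intro t s hst
    rcases hst.eq_or_lt with rfl | hst
    · simp
    have := le_of_mul_le_mul_right
      (show c * (t - s) * (t - s) ≤ (φ t - φ s) * (t - s) by nlinarith [h t s]) (sub_pos.2 hst)
    linarith
  refine hφ.surjective ?_ ?_
  · refine tendsto_atTop_mono' _ ?_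
      (tendsto_atTop_add_const_left _ (φ 0) (tendsto_id.const_mul_atTop hc))
    filter_upwards [eventually_ge_atTop 0] with t ht
    simpa using hlin t 0 ht
  · refine tendsto_atBot_mono' _ ?_
      (tendsto_atBot_add_const_left _ (φ 0) (tendsto_id.const_mul_atBot hc))
    filter_upwards [eventually_le_atBot 0] with t ht
    have := hlin 0 t ht
    simp only [id]
    linarith

theorem continuous_of_apply_eq_of_strongMono {K : Type*} [TopologicalSpace K]
    {φ : K → ℝ → ℝ} {c : ℝ} (hc : 0 < c) (hφ : ∀ t, Continuous fun k => φ k t)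
    (h : ∀ k t s, c * (t - s) ^ 2 ≤ (φ k t - φ k s) * (t - s)) {g : K → ℝ} {α : ℝ}
    (hg : ∀ k, φ k (g k) = α) : Continuous g := by
  refine continuous_iff_continuousAt.2 fun k₀ => ?_
  have hlim : Tendsto (fun k => |φ k (g k₀) - α| / c) (𝓝 k₀) (𝓝 0) := by
    simpa [hg k₀] using (((hφ (g k₀)).tendsto k₀).sub_const α).abs.div_const c
  refine tendsto_iff_dist_tendsto_zero.2 (squeeze_zero (fun _ => dist_nonneg) (fun k => ?_) hlim)
  have := mul_abs_sub_le_abs_sub (h k (g k) (g k₀))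
  rw [hg k, abs_sub_comm α] at this
  rw [Real.dist_eq, le_div_iff₀ hc, mul_comm]
  exact this

variable {E : Type*} [NormedAddCommGroup E] [InnerProductSpace ℝ E] {F : E → E} {c : ℝ}

theorem strongMono_inner_line (hF : ∀ x y, c * ‖x - y‖ ^ 2 ≤ ⟪F x - F y, x - y⟫) {e : E}
    (he : ‖e‖ = 1) (x : E) (t s : ℝ) :
    c * (t - s) ^ 2 ≤ (⟪F (x + t • e), e⟫ - ⟪F (x + s • e), e⟫) * (t - s) := by
  have h := hF (x + t • e) (x + s • e)
  rw [add_sub_add_left_eq_sub, ← sub_smul, norm_smul, he, mul_one, Real.norm_eq_abs, sq_abs,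
    real_inner_smul_right] at h
  rwa [← inner_sub_left, mul_comm _ (t - s)]

theorem mul_norm_sq_le_inner_orthogonalProjectionOnto [CompleteSpace E] (hc : 0 ≤ c)
    (hF : ∀ x y, c * ‖x - y‖ ^ 2 ≤ ⟪F x - F y, x - y⟫) {e : E} {k k' : (ℝ ∙ e)ᗮ}
    {t t' : ℝ} (h : ⟪F (k + t • e), e⟫ = ⟪F (k' + t' • e), e⟫) :
    c * ‖k - k'‖ ^ 2 ≤ ⟪(ℝ ∙ e)ᗮ.orthogonalProjectionOnto (F (k + t • e))
      - (ℝ ∙ e)ᗮ.orthogonalProjectionOnto (F (k' + t' • e)), k - k'⟫ := by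
  set d : E := F (k + t • e) - F (k' + t' • e)
  have hde : ⟪d, e⟫ = 0 := by rw [inner_sub_left, h, sub_self]
  have hke : ⟪((k - k' : (ℝ ∙ e)ᗮ) : E), e⟫ = 0 :=
    mem_orthogonal_singleton_iff_inner_left.1 (k - k').2
  have hdiff : (k + t • e) - (k' + t' • e) = ((k - k' : (ℝ ∙ e)ᗮ) : E) + (t - t') • e := by
    push_cast; module
  have hnorm : ‖k - k'‖ ^ 2 ≤ ‖(k + t • e) - (k' + t' • e)‖ ^ 2 := by
    rw [hdiff, norm_add_sq_real, real_inner_smul_right, hke, mul_zero, mul_zero, add_zero,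
      coe_norm]
    exact le_add_of_nonneg_right (sq_nonneg _)
  calc c * ‖k - k'‖ ^ 2 ≤ c * ‖(k + t • e) - (k' + t' • e)‖ ^ 2 :=
        mul_le_mul_of_nonneg_left hnorm hc
    _ ≤ ⟪d, (k + t • e) - (k' + t' • e)⟫ := hF _ _
    _ = _ := by
        rw [← map_sub, inner_orthogonalProjectionOnto_eq_of_mem_right, hdiff, inner_add_right,
          real_inner_smul_right, hde, mul_zero, add_zero]

theorem surjective_of_strongMono_of_orthogonal [CompleteSpace E] (hc : 0 < c)
    (hFc : Continuous F) (hF : ∀ x y, c * ‖x - y‖ ^ 2 ≤ ⟪F x - F y, x - y⟫) {e : E}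
    (he : ‖e‖ = 1)
    (hK : ∀ G : (ℝ ∙ e)ᗮ → (ℝ ∙ e)ᗮ, Continuous G →
      (∀ k k', c * ‖k - k'‖ ^ 2 ≤ ⟪G k - G k', k - k'⟫) → Function.Surjective G) :
    Function.Surjective F := by
  let K := (ℝ ∙ e)ᗮ
  intro y
  have hφ : ∀ t : ℝ, Continuous fun k : K => ⟪F (k + t • e), e⟫ := fun t => by fun_prop
  choose g hg using fun k : K => surjective_of_strongMono_real hc
    (by fun_prop) (strongMono_inner_line hF he k) ⟪y, e⟫
  beta_reduce at hg
  have hgc : Continuous g :=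
    continuous_of_apply_eq_of_strongMono hc hφ (fun k => strongMono_inner_line hF he k) hg
  obtain ⟨k, hk⟩ := hK (fun k => K.orthogonalProjectionOnto (F (k + g k • e)))
    (by fun_prop)
    (fun k k' =>
      mul_norm_sq_le_inner_orthogonalProjectionOnto hc.le hF ((hg k).trans (hg k').symm))
    (K.orthogonalProjectionOnto y)
  refine ⟨k + g k • e, sub_eq_zero.1 ?_⟩
  have hKperp : F (k + g k • e) - y ∈ Kᗮ :=
    orthogonalProjectionOnto_eq_zero_iff.1 (by rw [map_sub]; exact sub_eq_zero.2 hk)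
  rw [orthogonal_orthogonal] at hKperp
  obtain ⟨μ, hμ⟩ := mem_span_singleton.1 hKperp
  have he' : ⟪F (k + g k • e) - y, e⟫ = 0 := by rw [inner_sub_left, hg k, sub_self]
  rw [← hμ, real_inner_smul_left, real_inner_self_eq_norm_sq, he] at he'
  rw [← hμ, show μ = 0 by simpa using he', zero_smul]

theorem surjective_of_strongMono [FiniteDimensional ℝ E] (hc : 0 < c) (hFc : Continuous F)
    (hF : ∀ x y, c * ‖x - y‖ ^ 2 ≤ ⟪F x - F y, x - y⟫) : Function.Surjective F := by
  obtain ⟨n, hn⟩ : ∃ n, finrank ℝ E = n := ⟨_, rfl⟩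
  induction n generalizing E with
  | zero =>
    have := finrank_zero_iff.1 hn
    exact fun y => ⟨y, Subsingleton.elim _ _⟩
  | succ n ih =>
    have : Nontrivial E := nontrivial_of_finrank_eq_succ hn
    have : Fact (finrank ℝ E = n + 1) := ⟨hn⟩
    obtain ⟨e, he⟩ := exists_norm_eq E zero_le_one
    exact surjective_of_strongMono_of_orthogonal hc hFc hF he fun G hGc hG =>
      ih hGc hG (finrank_orthogonal_span_singleton (by rintro rfl; simp at he))

theorem exists_eq_of_monotone_of_norm_le [FiniteDimensional ℝ E] {A : E → E}
    (hA : Continuous A) (hmono : ∀ x y, 0 ≤ ⟪A x - A y, x - y⟫) (y : E) {R : ℝ}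
    (hR : ∀ x, ⟪A x, x⟫ ≤ ⟪y, x⟫ → ‖x‖ ≤ R) : ∃ x, A x = y := by
  set ε : ℕ → ℝ := fun n => 1 / ((n : ℝ) + 1)
  have hε : ∀ n, 0 < ε n := fun n => by positivity
  choose x hx using fun n => surjective_of_strongMono (F := fun x => A x + ε n • x) (hε n)
    (by fun_prop) (fun a b => by
      rw [add_sub_add_comm, ← smul_sub, inner_add_left, real_inner_smul_left,
        real_inner_self_eq_norm_sq]
      linarith [hmono a b]) y
  have hxR : ∀ n, x n ∈ Metric.closedBall 0 R := fun n => by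
    rw [mem_closedBall_zero_iff]
    refine hR _ ?_
    have := congrArg (⟪·, x n⟫) (hx n)
    simp only [inner_add_left, real_inner_smul_left, real_inner_self_eq_norm_sq] at this
    nlinarith [hε n, sq_nonneg ‖x n‖]
  obtain ⟨a, -, φ, hφ, hlim⟩ := tendsto_subseq_of_bounded Metric.isBounded_closedBall hxR
  have hεφ : Tendsto (fun n => ε (φ n)) atTop (𝓝 0) :=
    tendsto_one_div_add_atTop_nhds_zero_nat.comp hφ.tendsto_atTop
  have hAlim : Tendsto (fun n => y - ε (φ n) • x (φ n)) atTop (𝓝 y) := by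
    simpa using tendsto_const_nhds.sub (hεφ.smul hlim)
  refine ⟨a, tendsto_nhds_unique ((hA.tendsto a).comp hlim) ?_⟩
  refine hAlim.congr fun n => ?_
  rw [← hx (φ n), add_sub_cancel_right]
  rfl

end StronglyMonotone

section Galerkin

open Module
open scoped RealInnerProductSpace

variable {L : X → StrongDual ℝ X}

theorem IsMonotoneOperator.exists_galerkin (hmono : IsMonotoneOperator L)
    (hL : Demicontinuous L) (V : Submodule ℝ X) [FiniteDimensional ℝ V] (f : StrongDual ℝ X)
    {R : ℝ} (hR : ∀ u, L u u ≤ f u → ‖u‖ ≤ R) : ∃ u ∈ V, ∀ v ∈ V, L u v = f v := by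
  let E := EuclideanSpace ℝ (Fin (finrank ℝ V))
  let Ψ : E ≃L[ℝ] V := ContinuousLinearEquiv.ofFinrankEq (by simp [E])
  let Φ : E →L[ℝ] X := V.subtypeL ∘L Ψ.toContinuousLinearMap
  let rep : StrongDual ℝ X → E := fun φ => (InnerProductSpace.toDual ℝ E).symm (φ ∘L Φ)
  have hrep : ∀ φ d, ⟪rep φ, d⟫ = φ (Φ d) := fun φ d => InnerProductSpace.toDual_symm_apply
  obtain ⟨a, ha⟩ := exists_eq_of_monotone_of_norm_le (A := fun a => rep (L (Φ a)))
    ((InnerProductSpace.toDual ℝ E).symm.continuous.comp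
      (continuous_clm_apply.2 fun d => hL.continuous_apply Φ.continuous (Φ d)))
    (fun a b => by
      rw [inner_sub_left, hrep, hrep, map_sub]
      exact hmono _ _)
    (rep f) (R := ‖(Ψ.symm : V →L[ℝ] E)‖ * R) (fun a h => by
      rw [hrep, hrep] at h
      calc ‖a‖ = ‖(Ψ.symm : V →L[ℝ] E) (Ψ a)‖ := by simp
        _ ≤ ‖(Ψ.symm : V →L[ℝ] E)‖ * ‖Ψ a‖ := ContinuousLinearMap.le_opNorm _ _
        _ ≤ ‖(Ψ.symm : V →L[ℝ] E)‖ * R := by gcongr; exact hR _ h)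
  refine ⟨Φ a, (Ψ a).2, fun v hv => ?_⟩
  obtain ⟨d, rfl⟩ : ∃ d, Φ d = v := ⟨Ψ.symm ⟨v, hv⟩, by simp [Φ]⟩
  rw [← hrep, ← hrep]
  exact congrArg (⟪·, d⟫) ha

end Galerkin

section Inverse

variable {L : X → StrongDual ℝ X}

theorem IsMonotoneOperator.surjective
    (hrefl : Function.Surjective (inclusionInDoubleDual ℝ X)) (hmono : IsMonotoneOperator L)
    (hL : Demicontinuous L) (hcoer : ∀ C : ℝ, ∃ R, ∀ u, L u u ≤ C * ‖u‖ → ‖u‖ ≤ R) :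
    Function.Surjective L := by
  intro f
  obtain ⟨R, hR⟩ := hcoer ‖f‖
  have hfR : ∀ u, L u u ≤ f u → ‖u‖ ≤ R := fun u h =>
    hR u (h.trans ((le_abs_self _).trans (f.le_opNorm u)))
  choose u huV hu using fun s : Finset X =>
    hmono.exists_galerkin hL (Submodule.span ℝ (s : Set X)) f hfR
  have hbdd : IsBounded (Set.range u) := isBounded_iff_forall_norm_le.2
    ⟨R, Set.forall_mem_range.2 fun s => hfR _ (hu s _ (huV s)).le⟩
  obtain ⟨u₀, hu₀⟩ := exists_mapClusterPt_toWeakSpace hrefl (l := atTop) hbdd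
  refine ⟨u₀, hL.eq_of_forall_nonneg fun z => ?_⟩
  -- once `z ∈ span s`, the Galerkin identity `L (u s) = f` on `span s` turns
  -- `(L z - f) (z - u s)` into the monotonicity pairing `(L z - L (u s)) (z - u s) ≥ 0`
  have hz : (L z - f) u₀ ≤ (L z - f) z := by
    refine apply_le_of_mapClusterPt_toWeakSpace hu₀ _ tendsto_const_nhds ?_
    filter_upwards [eventually_ge_atTop {z}] with s hs
    have hzs : z ∈ Submodule.span ℝ (s : Set X) :=
      Submodule.subset_span (by simpa using hs)
    have := hmono z (u s)
    simp only [sub_apply, map_sub] at this ⊢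
    linarith [hu s z hzs, hu s (u s) (huV s)]
  rw [map_sub]
  linarith

theorem isBounded_image_of_apply_self_le
    (hcoer : ∀ C : ℝ, ∃ R, ∀ u, L u u ≤ C * ‖u‖ → ‖u‖ ≤ R) {T : StrongDual ℝ X → X}
    (hT : ∀ v, L (T v) = v) {B : Set (StrongDual ℝ X)} (hB : IsBounded B) :
    IsBounded (T '' B) := by
  obtain ⟨C, hC⟩ := isBounded_iff_forall_norm_le.1 hB
  obtain ⟨R, hR⟩ := hcoer C
  refine isBounded_iff_forall_norm_le.2 ⟨R, Set.forall_mem_image.2 fun v hv => hR _ ?_⟩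
  rw [hT]
  exact (le_abs_self _).trans ((v.le_opNorm _).trans (by gcongr; exact hC v hv))

theorem isBounded_range_of_tendsto_apply [CompleteSpace X] {v : ℕ → StrongDual ℝ X}
    {w : StrongDual ℝ X} (h : ∀ x, Tendsto (fun n => v n x) atTop (𝓝 (w x))) :
    IsBounded (Set.range v) := by
  obtain ⟨C, hC⟩ := banach_steinhaus fun x => by
    obtain ⟨C, hC⟩ := (h x).norm.bddAbove_range
    exact ⟨C, fun n => hC (Set.mem_range_self n)⟩
  exact isBounded_iff_forall_norm_le.2 ⟨C, Set.forall_mem_range.2 hC⟩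

theorem IsMonotoneOperator.tendsto_toWeakSpace
    (hrefl : Function.Surjective (inclusionInDoubleDual ℝ X)) (hmono : IsMonotoneOperator L)
    (hL : Demicontinuous L) (hinj : Function.Injective L) {u : ℕ → X} {u₀ : X}
    (hu : IsBounded (Set.range u))
    (hw : ∀ x, Tendsto (fun n => L (u n) x) atTop (𝓝 (L u₀ x)))
    (ha : Tendsto (fun n => (L (u n) - L u₀) (u n - u₀)) atTop (𝓝 0)) :
    Tendsto (toWeakSpace ℝ X ∘ u) atTop (𝓝 (toWeakSpace ℝ X u₀)) := by
  refine tendsto_toWeakSpace_of_unique_mapClusterPt hrefl hu fun u' hu' =>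
    hinj (hL.eq_of_forall_nonneg fun z => ?_)
  have hb : Tendsto (fun n => (L z - L u₀) z - (L (u n) - L u₀) (z - u₀)
      + (L (u n) - L u₀) (u n - u₀)) atTop (𝓝 ((L z - L u₀) z)) := by
    have h := (hw (z - u₀)).sub_const (L u₀ (z - u₀))
    simp only [sub_self] at h
    simpa using (tendsto_const_nhds.sub h).add ha
  have hz := apply_le_of_mapClusterPt_toWeakSpace hu' (L z - L u₀) hb
    (Eventually.of_forall fun n => by
      have := hmono z (u n)
      simp only [sub_apply, map_sub] at this ⊢
      linarith)
  rw [map_sub]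
  linarith

theorem IsMonotoneOperator.tendsto_of_limsup_le
    (hrefl : Function.Surjective (inclusionInDoubleDual ℝ X)) (hmono : IsMonotoneOperator L)
    (hL : Demicontinuous L) (hinj : Function.Injective L)
    (hsplus : ∀ (u : ℕ → X) (x : X), WeakConvSeq u x →
      limsup (fun n => L (u n) (u n - x)) atTop ≤ 0 → Tendsto u atTop (𝓝 x))
    {u : ℕ → X} {u₀ : X} (hu : IsBounded (Set.range u)) (hLu : IsBounded (Set.range (L ∘ u)))
    (hw : ∀ x, Tendsto (fun n => L (u n) x) atTop (𝓝 (L u₀ x)))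
    (hls : limsup (fun n => (L (u n) - L u₀) (u n - u₀)) atTop ≤ 0) :
    Tendsto u atTop (𝓝 u₀) := by
  set a : ℕ → ℝ := fun n => (L (u n) - L u₀) (u n - u₀)
  obtain ⟨C, hC⟩ := isBounded_iff_forall_norm_le.1 hu
  obtain ⟨C', hC'⟩ := isBounded_iff_forall_norm_le.1 hLu
  have hC'₀ : 0 ≤ C' + ‖L u₀‖ :=
    add_nonneg ((norm_nonneg _).trans (hC' _ (Set.mem_range_self 0))) (norm_nonneg _)
  have ha_le : ∀ n, a n ≤ (C' + ‖L u₀‖) * (C + ‖u₀‖) := fun n =>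
    (le_abs_self _).trans <| ((L (u n) - L u₀).le_opNorm _).trans <| mul_le_mul
      ((norm_sub_le _ _).trans (by gcongr; exact hC' _ (Set.mem_range_self n)))
      ((norm_sub_le _ _).trans (by gcongr; exact hC _ (Set.mem_range_self n)))
      (norm_nonneg _) hC'₀
  have ha : Tendsto a atTop (𝓝 0) :=
    tendsto_of_le_liminf_of_limsup_le
      (le_liminf_of_le (isBoundedUnder_of ⟨_, ha_le⟩).isCoboundedUnder_ge
        (Eventually.of_forall fun n => hmono (u n) u₀)) hls
      (isBoundedUnder_of ⟨_, ha_le⟩) (isBoundedUnder_of ⟨0, fun n => hmono (u n) u₀⟩)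
  have hweak := weakConvSeq_of_tendsto_toWeakSpace
    (hmono.tendsto_toWeakSpace hrefl hL hinj hu hw ha)
  refine hsplus u u₀ hweak (le_of_eq (Tendsto.limsup_eq ?_))
  have h := ha.add ((hweak (L u₀)).sub_const (L u₀ u₀))
  simp only [sub_self, add_zero] at h
  refine h.congr fun n => ?_
  simp only [a, sub_apply, map_sub]
  ring

end Inverse

theorem stmt10_general [CompleteSpace X]
    (hrefl : Function.Surjective (NormedSpace.inclusionInDoubleDual ℝ X))
    (L : X → StrongDual ℝ X)
    (hdemi : ∀ (u : ℕ → X) (x : X), Tendsto u atTop (𝓝 x) →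
      ∀ w : X, Tendsto (fun n => L (u n) w) atTop (𝓝 (L x w)))
    (hmono : ∀ u v : X, u ≠ v → 0 < (L u - L v) (u - v))
    (hsplus : ∀ (u : ℕ → X) (x : X), WeakConvSeq u x →
      limsup (fun n => L (u n) (u n - x)) atTop ≤ 0 → Tendsto u atTop (𝓝 x))
    (hcoer : ∀ M : ℝ, ∃ R : ℝ, ∀ u : X, R ≤ ‖u‖ → M * ‖u‖ ≤ L u u) :
    Function.Bijective L ∧
    ∃ T : StrongDual ℝ X → X,
      (∀ v, L (T v) = v) ∧ (∀ u, T (L u) = u) ∧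
      (∀ B : Set (StrongDual ℝ X), IsBounded B → IsBounded (T '' B)) ∧
      (∀ (v : ℕ → StrongDual ℝ X) (w : StrongDual ℝ X),
        (∀ x : X, Tendsto (fun n => v n x) atTop (𝓝 (w x))) →
        limsup (fun n => (v n - w) (T (v n) - T w)) atTop ≤ 0 →
        Tendsto (fun n => T (v n)) atTop (𝓝 (T w))) := by
  have hmono' : IsMonotoneOperator L := IsStrictMonotoneOperator.isMonotoneOperator hmono
  have hinj : Function.Injective L := IsStrictMonotoneOperator.injective hmono
  have hcoer' := exists_norm_le_of_apply_self_le hcoer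
  have hsurj : Function.Surjective L := hmono'.surjective hrefl hdemi hcoer'
  set T := Function.surjInv hsurj
  have hLT : ∀ v, L (T v) = v := Function.surjInv_eq hsurj
  have hTbdd : ∀ B, IsBounded B → IsBounded (T '' B) := fun B =>
    isBounded_image_of_apply_self_le hcoer' hLT
  refine ⟨⟨hinj, hsurj⟩, T, hLT, fun u => hinj (hLT _), hTbdd, fun v w hvw hls => ?_⟩
  have hv := isBounded_range_of_tendsto_apply hvw
  have hTv : IsBounded (Set.range fun n => T (v n)) := by
    rw [← Function.comp_def, Set.range_comp]
    exact hTbdd _ hv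
  have hLTv : IsBounded (Set.range (L ∘ fun n => T (v n))) := by
    simpa only [Function.comp_def, hLT] using hv
  exact hmono'.tendsto_of_limsup_le hrefl hdemi hinj hsplus hTv hLTv
    (by simpa only [hLT] using hvw) (by simpa only [hLT] using hls)

theorem stmt10 [CompleteSpace X]
    (hrefl : Function.Surjective (NormedSpace.inclusionInDoubleDual ℝ X))
    (L : X → StrongDual ℝ X)
    (hbdd : ∀ B : Set X, IsBounded B → IsBounded (L '' B))
    (hdemi : ∀ (u : ℕ → X) (x : X), Tendsto u atTop (𝓝 x) →
      ∀ w : X, Tendsto (fun n => L (u n) w) atTop (𝓝 (L x w)))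
    (hmono : ∀ u v : X, u ≠ v → 0 < (L u - L v) (u - v))
    (hsplus : ∀ (u : ℕ → X) (x : X), WeakConvSeq u x →
      limsup (fun n => L (u n) (u n - x)) atTop ≤ 0 → Tendsto u atTop (𝓝 x))
    (hcoer : ∀ M : ℝ, ∃ R : ℝ, ∀ u : X, R ≤ ‖u‖ → M * ‖u‖ ≤ L u u) :
    Function.Bijective L ∧
    ∃ T : StrongDual ℝ X → X,
      (∀ v, L (T v) = v) ∧ (∀ u, T (L u) = u) ∧
      (∀ B : Set (StrongDual ℝ X), IsBounded B → IsBounded (T '' B)) ∧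
      (∀ (v : ℕ → StrongDual ℝ X) (w : StrongDual ℝ X),
        (∀ x : X, Tendsto (fun n => v n x) atTop (𝓝 (w x))) →
        limsup (fun n => (v n - w) (T (v n) - T w)) atTop ≤ 0 →
        Tendsto (fun n => T (v n)) atTop (𝓝 (T w))) :=
  stmt10_general hrefl L hdemi hmono hsplus hcoer
end
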